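/- arXiv:1104.5400 — 5 statements merged into one kernel-verified Lean document; each statement's English description precedes it below -/
import Mathlib

section
/- Let α be a finite type with decidable equality, ι a finite index type with |ι| ≤ |α|, and f : ι → Finset α a family of hyper-edges. For a finite set V : Finset α, write E(V) for the set of indices i with f i ⊆ V. If there exists V : Finset α with |E(V)| ≥ |V| + 2, then there exists V' : Finset α with V ⊆ V' and |E(V')| = |V'| + 1. -/
private lemma stmt_2_aux {α ι : Type*} [Fintype α] [DecidableEq α] [Fintype ι]
    (hcard : Fintype.card ι ≤ Fintype.card α) (f : ι → Finset α) :
    ∀ n (V : Finset α), (Finset.univ \ V).card = n →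
      V.card + 2 ≤ (Finset.univ.filter (fun i : ι => f i ⊆ V)).card →
      ∃ V' : Finset α, V ⊆ V' ∧
        (Finset.univ.filter (fun i : ι => f i ⊆ V')).card = V'.card + 1 := by
  intro n
  induction n with
  | zero =>
    intro V h0 hV
    exfalso
    have hVuniv : V = Finset.univ := by
      have := Finset.card_eq_zero.mp h0
      have : Finset.univ ⊆ V := by
        intro a _
        by_contra ha
        have : a ∈ Finset.univ \ V := by simp [ha]
        simp [Finset.card_eq_zero.mp h0] at this
      exact Finset.univ_subset_iff.mp this
    have h1 : (Finset.univ.filter (fun i : ι => f i ⊆ V)).card ≤ Fintype.card ι :=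
      le_trans (Finset.card_filter_le _ _) (le_of_eq (Finset.card_univ))
    have h2 : Fintype.card α = V.card := by rw [hVuniv, Finset.card_univ]
    omega
  | succ n ih =>
    intro V h0 hV
    -- pick a vertex not in V
    have hne : (Finset.univ \ V).Nonempty := by
      rw [← Finset.card_pos, h0]; omega
    obtain ⟨a, ha⟩ := hne
    have haV : a ∉ V := (Finset.mem_sdiff.mp ha).2
    set W := insert a V with hW
    have hsub : V ⊆ W := Finset.subset_insert a V
    have hcardW : W.card = V.card + 1 := Finset.card_insert_of_notMem haV
    have hmono : (Finset.univ.filter (fun i : ι => f i ⊆ V)).card ≤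
        (Finset.univ.filter (fun i : ι => f i ⊆ W)).card := by
      apply Finset.card_le_card
      intro i hi
      simp only [Finset.mem_filter] at *
      exact ⟨hi.1, hi.2.trans hsub⟩
    have hcompW : (Finset.univ \ W).card = n := by
      have : Finset.univ \ W = (Finset.univ \ V).erase a := by
        ext x; simp [hW, Finset.mem_sdiff, Finset.mem_erase, and_comm, not_or]
      rw [this, Finset.card_erase_of_mem ha, h0]; omega
    by_cases hcase : (Finset.univ.filter (fun i : ι => f i ⊆ W)).card = W.card + 1
    · exact ⟨W, hsub, hcase⟩
    · have hge : W.card + 2 ≤ (Finset.univ.filter (fun i : ι => f i ⊆ W)).card := by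
        omega
      obtain ⟨V', hV'sub, hV'⟩ := ih W hcompW hge
      exact ⟨V', hsub.trans hV'sub, hV'⟩

/-- If some vertex set `V` carries at least `|V| + 2` edges, then there is a
superset `V'` of `V` carrying exactly `|V'| + 1` edges (given that the number of
edges is at most the number of vertices). -/
theorem stmt_2 {α ι : Type*} [Fintype α] [DecidableEq α] [Fintype ι]
    (hcard : Fintype.card ι ≤ Fintype.card α)
    (f : ι → Finset α) (V : Finset α)
    (hV : V.card + 2 ≤ (Finset.univ.filter (fun i : ι => f i ⊆ V)).card) :
    ∃ V' : Finset α, V ⊆ V' ∧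
      (Finset.univ.filter (fun i : ι => f i ⊆ V')).card = V'.card + 1 :=
  stmt_2_aux hcard f _ V rfl hV
end

section
/- Let n, k, d, v, m be natural numbers with 1 ≤ k ≤ v and v + 1 ≤ m, and let V ⊆ Fin n with |V| = v. Let each of m items be hashed independently, each item to a d-tuple of buckets chosen i.i.d. uniformly among the k-element subsets of Fin n. Set p_hit = (C(v,k)/C(n,k))^d and p₁ = d · ((n−v) · C(v,k−1)/C(n,k)) · (C(v,k)/C(n,k))^{d−1}. Then the probability that exactly v + 1 of the m items have all d of their buckets contained in V, and no item has exactly d − 1 buckets contained in V with its remaining bucket containing exactly k − 1 elements of V, equals C(m, v+1) · p_hit^{v+1} · (1 − p₁ − p_hit)^{m−(v+1)}. -/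
/-!
Classify each item as a *hit* (all `d` buckets inside `V`), a *near miss* (one bucket with
exactly one cell outside `V`, all others inside `V`) or neither; hits and near misses are
disjoint. Since items are i.i.d., each of the `C(m, v+1)` possible sets of hit items
contributes `p_hit^(v+1) · (1 - p₁ - p_hit)^(m-v-1)`. Since the buckets of an item are i.i.d.,
`p_hit` and `p₁` are products of one-bucket probabilities, which come from counting buckets:
`C(v, k)` lie inside `V`, and `(n - v) · C(v, k-1)` have exactly one cell outside `V`.
-/

open MeasureTheory

/-- The discrete measurable structure on buckets (finite sets of memory cells). -/
instance (n : ℕ) : MeasurableSpace (Finset (Fin n)) := ⊤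

open Finset

theorem Finset.card_filter_subset_powersetCard_univ {α : Type*} [Fintype α] [DecidableEq α]
    (V : Finset α) (k : ℕ) :
    #{s ∈ (univ : Finset α).powersetCard k | s ⊆ V} = (#V).choose k := by
  rw [← card_powersetCard]
  congr 1
  ext s
  simp [mem_powersetCard, and_comm]

theorem Finset.card_filter_card_inter_eq_pred_powersetCard_univ {α : Type*} [Fintype α]
    [DecidableEq α] (V : Finset α) {k : ℕ} (hk : 1 ≤ k) :
    #{s ∈ (univ : Finset α).powersetCard k | ¬ s ⊆ V ∧ #(s ∩ V) = k - 1}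
      = (Fintype.card α - #V) * (#V).choose (k - 1) := by
  have split : #{s ∈ (univ : Finset α).powersetCard k | ¬ s ⊆ V ∧ #(s ∩ V) = k - 1}
      = #(V.powersetCard (k - 1) ×ˢ Vᶜ.powersetCard 1) := by
    -- such a set is a `(k-1)`-subset of `V` together with one element outside `V`
    apply card_nbij' (fun s => (s ∩ V, s \ V)) (fun p => p.1 ∪ p.2)
    · intro s hs
      simp only [coe_filter, mem_powersetCard_univ, Set.mem_ofPred_eq] at hs
      have := card_inter_add_card_sdiff s V
      simp only [mem_coe, mem_product, mem_powersetCard]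
      refine ⟨⟨inter_subset_right, hs.2.2⟩, fun x hx => ?_, by omega⟩
      simpa using (mem_sdiff.mp hx).2
    · rintro ⟨t, u⟩ hp
      simp only [mem_coe, mem_product, mem_powersetCard, subset_compl_iff_disjoint_right] at hp
      obtain ⟨⟨htV, htc⟩, huV, huc⟩ := hp
      obtain ⟨x, rfl⟩ := card_eq_one.mp huc
      have hxV : x ∉ V := by simpa using huV
      have hxt : x ∉ t := fun hx => hxV (htV hx)
      simp only [coe_filter, mem_powersetCard_univ, Set.mem_ofPred_eq]
      refine ⟨by simp [hxt, htc]; omega, fun h => hxV (h (by simp)), ?_⟩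
      rw [union_inter_distrib_right, inter_eq_left.mpr htV]
      simp [hxV, htc]
    · intro s _
      exact sup_inf_sdiff s V
    · rintro ⟨t, u⟩ hp
      simp only [mem_coe, mem_product, mem_powersetCard, subset_compl_iff_disjoint_right] at hp
      obtain ⟨⟨htV, -⟩, huV, -⟩ := hp
      have := disjoint_left.mp huV
      ext x <;> simp <;> grind
  rw [split, card_product, card_powersetCard, card_powersetCard, card_compl, Nat.choose_one_right,
    mul_comm]

theorem Set.mem_univ_pi_ite_compl_union_iff {ι α : Type*} [Fintype ι] [DecidableEq ι]
    {A B : Set α} [DecidablePred (· ∈ A)]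
    (hAB : Disjoint A B) (S : Finset ι) (ω : ι → α) :
    ω ∈ Set.univ.pi (fun i => if i ∈ S then A else (A ∪ B)ᶜ)
      ↔ ({i | ω i ∈ A} : Finset ι) = S ∧ ∀ i, ω i ∉ B := by
  simp only [Set.mem_univ_pi, Finset.ext_iff, mem_filter_univ]
  constructor
  · intro h
    refine ⟨fun i => ⟨fun hi => ?_, fun hi => ?_⟩, fun i hi => ?_⟩
    · by_contra hS
      simpa [hS, hi] using h i
    · simpa [hi] using h i
    · by_cases hS : i ∈ S
      · exact hAB.notMem_of_mem_left (by simpa [hS] using h i) hi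
      · simpa [hS, hi] using h i
  · rintro ⟨hS, hB⟩ i
    by_cases hi : i ∈ S <;> simp [hi, hS i, hB i]

namespace MeasureTheory.Measure

variable {ι α : Type*} [Fintype ι] [MeasurableSpace α]

theorem pi_setOf_forall_mem (μ : Measure α) [SigmaFinite μ] (H : Set α) :
    Measure.pi (fun _ : ι => μ) {ω | ∀ i, ω i ∈ H} = μ H ^ Fintype.card ι := by
  have hset : {ω : ι → α | ∀ i, ω i ∈ H} = Set.univ.pi fun _ => H := by
    ext ω
    simp
  rw [hset, pi_pi, prod_const, card_univ]

variable [DecidableEq ι]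

theorem pi_univ_pi_ite (μ : Measure α) [SigmaFinite μ] (S : Finset ι) (A C : Set α) :
    Measure.pi (fun _ : ι => μ) (Set.univ.pi fun i => if i ∈ S then A else C)
      = μ A ^ #S * μ C ^ (Fintype.card ι - #S) := by
  simp_rw [pi_pi, apply_ite μ]
  rw [prod_ite, prod_const, prod_const, filter_mem_eq_inter, univ_inter, filter_not,
    filter_mem_eq_inter, univ_inter, card_sdiff_of_subset S.subset_univ, card_univ]

theorem measurableSet_univ_pi_ite (S : Finset ι) {A C : Set α} (hA : MeasurableSet A)
    (hC : MeasurableSet C) : MeasurableSet (Set.univ.pi fun i => if i ∈ S then A else C) :=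
  .univ_pi fun i => by split_ifs <;> assumption

theorem pi_setOf_card_eq_and_forall_notMem (μ : Measure α) [IsProbabilityMeasure μ]
    {A B : Set α} [DecidablePred (· ∈ A)] (hA : MeasurableSet A) (hB : MeasurableSet B)
    (hAB : Disjoint A B) (r : ℕ) :
    Measure.pi (fun _ : ι => μ) {ω | #{i | ω i ∈ A} = r ∧ ∀ i, ω i ∉ B}
      = (Fintype.card ι).choose r * μ A ^ r * (1 - μ B - μ A) ^ (Fintype.card ι - r) := by
  have hset : {ω : ι → α | #{i | ω i ∈ A} = r ∧ ∀ i, ω i ∉ B}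
      = ⋃ S ∈ univ.powersetCard r, Set.univ.pi (fun i => if i ∈ S then A else (A ∪ B)ᶜ) := by
    ext ω
    simp only [Set.mem_ofPred_eq, Set.mem_iUnion, Set.mem_univ_pi_ite_compl_union_iff hAB,
      mem_powersetCard_univ, exists_prop]
    constructor
    · rintro ⟨hr, hB⟩
      exact ⟨_, hr, rfl, hB⟩
    · rintro ⟨S, hr, rfl, hB⟩
      exact ⟨hr, hB⟩
  have hdisj : Set.PairwiseDisjoint ((univ.powersetCard r : Finset (Finset ι)) : Set (Finset ι))
      (fun S => Set.univ.pi (fun i => if i ∈ S then A else (A ∪ B)ᶜ)) := by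
    intro S _ S' _ hne
    refine Set.disjoint_left.mpr fun ω h h' => hne ?_
    rw [Set.mem_univ_pi_ite_compl_union_iff hAB] at h h'
    exact h.1.symm.trans h'.1
  have hcompl : μ (A ∪ B)ᶜ = 1 - μ B - μ A := by
    rw [prob_compl_eq_one_sub (hA.union hB), measure_union hAB hB, tsub_tsub, add_comm]
  rw [hset, measure_biUnion_finset hdisj fun S _ => measurableSet_univ_pi_ite S hA (hA.union hB).compl,
    Finset.sum_congr rfl fun S hS => by rw [pi_univ_pi_ite, (mem_powersetCard_univ.mp hS)], sum_const,
    card_powersetCard, card_univ, nsmul_eq_mul, hcompl, mul_assoc]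

theorem pi_setOf_exists_forall_ne_mem_and_mem (μ : Measure α) [SigmaFinite μ] {H N : Set α}
    (hH : MeasurableSet H) (hN : MeasurableSet N) (hHN : Disjoint H N) :
    Measure.pi (fun _ : ι => μ) {ω | ∃ j, (∀ j', j' ≠ j → ω j' ∈ H) ∧ ω j ∈ N}
      = Fintype.card ι * μ N * μ H ^ (Fintype.card ι - 1) := by
  have hset : {ω : ι → α | ∃ j, (∀ j', j' ≠ j → ω j' ∈ H) ∧ ω j ∈ N}
      = ⋃ j, Set.univ.pi (fun j' => if j' ∈ ({j} : Finset ι) then N else H) := by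
    ext ω
    simp only [Set.mem_ofPred_eq, Set.mem_iUnion, Set.mem_univ_pi, mem_singleton]
    refine exists_congr fun j => ⟨fun ⟨hne, hj⟩ j' => ?_, fun h => ⟨fun j' hj' => ?_, ?_⟩⟩
    · split_ifs with h
      exacts [h ▸ hj, hne j' h]
    · simpa [hj'] using h j'
    · simpa using h j
  have hdisj : Pairwise (Function.onFun Disjoint
      fun j => Set.univ.pi (fun j' => if j' ∈ ({j} : Finset ι) then N else H)) := by
    intro j j' hne
    refine Set.disjoint_left.mpr fun ω h h' => hHN.notMem_of_mem_left ?_ ?_ (a := ω j')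
    · simpa [Ne.symm hne] using h j' (Set.mem_univ _)
    · simpa using h' j' (Set.mem_univ _)
  rw [hset, measure_iUnion hdisj fun j => measurableSet_univ_pi_ite _ hN hH, tsum_fintype]
  simp_rw [pi_univ_pi_ite, card_singleton, pow_one]
  rw [sum_const, card_univ, nsmul_eq_mul, mul_assoc]

end MeasureTheory.Measure

namespace PMF

variable {α : Type*} [Fintype α] [DecidableEq α] [MeasurableSpace (Finset α)]
  [DiscreteMeasurableSpace (Finset α)] (V : Finset α) {k : ℕ}
  (hs : ((univ : Finset α).powersetCard k).Nonempty)

theorem toMeasure_uniformOfFinset_powersetCard_setOf_subset :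
    (uniformOfFinset _ hs).toMeasure {s | s ⊆ V}
      = ((#V).choose k : ENNReal) / (Fintype.card α).choose k := by
  rw [toMeasure_uniformOfFinset_apply hs _ .of_discrete, card_powersetCard, card_univ]
  simp only [Set.mem_ofPred_eq, card_filter_subset_powersetCard_univ]

theorem toMeasure_uniformOfFinset_powersetCard_setOf_card_inter_eq_pred (hk : 1 ≤ k) :
    (uniformOfFinset _ hs).toMeasure {s | ¬ s ⊆ V ∧ #(s ∩ V) = k - 1}
      = ((Fintype.card α : ENNReal) - #V) * (#V).choose (k - 1) / (Fintype.card α).choose k := by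
  rw [toMeasure_uniformOfFinset_apply hs _ .of_discrete, card_powersetCard, card_univ]
  simp only [Set.mem_ofPred_eq, card_filter_card_inter_eq_pred_powersetCard_univ V hk]
  push_cast [ENNReal.natCast_sub]
  rfl

end PMF

/-- The probability `p_bad(v)` that a given vertex set `V` of size `v` is bad:
`m` items are hashed independently, each to a `d`-tuple of buckets chosen i.i.d.
uniformly among the `k`-element subsets of `Fin n`.  With
`p_hit = (C(v,k)/C(n,k))^d` and
`p₁ = d·((n−v)·C(v,k−1)/C(n,k))·(C(v,k)/C(n,k))^{d−1}`, the probability that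
exactly `v+1` items have all their buckets inside `V` while no item has exactly
`d−1` buckets inside `V` with the remaining bucket meeting `V` in exactly `k−1`
cells equals `C(m,v+1)·p_hit^{v+1}·(1−p₁−p_hit)^{m−(v+1)}`. -/
theorem stmt_6 (n k d v m : ℕ) (hk : 1 ≤ k) (hkv : k ≤ v)
    (V : Finset (Fin n)) (hV : V.card = v) :
    Measure.pi (fun _ : Fin m =>
        Measure.pi (fun _ : Fin d =>
          (PMF.uniformOfFinset
            ((Finset.univ : Finset (Fin n)).powersetCard k)
            (by
              rw [Finset.powersetCard_nonempty]
              have : v ≤ n := by simpa [hV] using V.card_le_univ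
              simpa using hkv.trans this)).toMeasure))
      {ω : Fin m → Fin d → Finset (Fin n) |
        (Finset.univ.filter
            (fun i : Fin m => ∀ j : Fin d, ω i j ⊆ V)).card = v + 1 ∧
          ∀ i : Fin m, ¬ ∃ j : Fin d,
            (∀ j' : Fin d, j' ≠ j → ω i j' ⊆ V) ∧ ¬ ω i j ⊆ V ∧
              (ω i j ∩ V).card = k - 1} =
    (m.choose (v + 1) : ENNReal) *
        (((v.choose k : ENNReal) / (n.choose k : ENNReal)) ^ d) ^ (v + 1) *
        (1 -
            (d : ENNReal) *
              (((n : ENNReal) - (v : ENNReal)) * (v.choose (k - 1) : ENNReal) /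
                (n.choose k : ENNReal)) *
              ((v.choose k : ENNReal) / (n.choose k : ENNReal)) ^ (d - 1) -
            ((v.choose k : ENNReal) / (n.choose k : ENNReal)) ^ d) ^
          (m - (v + 1)) := by
  generalize_proofs hs
  set bucket := (PMF.uniformOfFinset _ hs).toMeasure
  set inside : Set (Finset (Fin n)) := {s | s ⊆ V}
  set oneOut : Set (Finset (Fin n)) := {s | ¬ s ⊆ V ∧ #(s ∩ V) = k - 1}
  have hit : Measure.pi (fun _ : Fin d => bucket) {b | ∀ j, b j ∈ inside}
      = ((v.choose k : ENNReal) / (n.choose k : ENNReal)) ^ d := by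
    rw [Measure.pi_setOf_forall_mem, PMF.toMeasure_uniformOfFinset_powersetCard_setOf_subset, hV,
      Fintype.card_fin, Fintype.card_fin]
  have hinside : Disjoint inside oneOut := Set.disjoint_left.mpr fun s hs hs' => hs'.1 hs
  have near : Measure.pi (fun _ : Fin d => bucket)
      {b | ∃ j, (∀ j', j' ≠ j → b j' ∈ inside) ∧ b j ∈ oneOut}
      = (d : ENNReal) * (((n : ENNReal) - (v : ENNReal)) * (v.choose (k - 1) : ENNReal) /
          (n.choose k : ENNReal)) * ((v.choose k : ENNReal) / (n.choose k : ENNReal)) ^ (d - 1) := by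
    rw [Measure.pi_setOf_exists_forall_ne_mem_and_mem _ .of_discrete .of_discrete hinside,
      PMF.toMeasure_uniformOfFinset_powersetCard_setOf_subset,
      PMF.toMeasure_uniformOfFinset_powersetCard_setOf_card_inter_eq_pred _ _ hk, hV]
    simp only [Fintype.card_fin]
  have hitNear : Disjoint {b : Fin d → Finset (Fin n) | ∀ j, b j ∈ inside}
      {b | ∃ j, (∀ j', j' ≠ j → b j' ∈ inside) ∧ b j ∈ oneOut} :=
    Set.disjoint_left.mpr fun b hb ⟨j, _, hj⟩ => hinside.notMem_of_mem_left (hb j) hj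
  have := Measure.pi_setOf_card_eq_and_forall_notMem (ι := Fin m)
    (Measure.pi fun _ : Fin d => bucket) .of_discrete .of_discrete hitNear (v + 1)
  rwa [hit, near, Fintype.card_fin] at this
end

section
/- Let n, m, v, d, k be natural numbers with d ≥ 1, 1 ≤ k ≤ v, and v + 1 ≤ m ≤ n, and set x = v/n as a real number. Then (C(n,v) : ℝ) · C(m, v+1) · (C(v,k)/C(n,k))^{d(v+1)} < c₀(x) · c₁(x)^n, where c₀(x) = e · x^{dk−1} and c₁(x) = e^{2x} · x^{(dk−2)x} (real powers). -/
/-! With `x = v/n`, the three factors are bounded by `(e/x)^v`, `(e/x)^(v+1)` and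
`x^(k·d(v+1))`: the first two by `C(N,r) ≤ N^r/r!` together with `r^r/r! < e^r` (the Taylor
series of `exp r` has the further term `1`, which gives strictness), the third factorwise from
`(v-i)/(n-i) ≤ v/n`. Since `xn = v`, the product `e^(2v+1) · x^(dk(v+1) - 2v - 1)` is exactly
`c₀(x) · c₁(x)^n`. -/

open Real Finset Nat

theorem Nat.descFactorial_mul_pow_le_descFactorial_mul_pow {v n : ℕ} (hvn : v ≤ n) (k : ℕ) :
    v.descFactorial k * n ^ k ≤ n.descFactorial k * v ^ k := by
  induction k with
  | zero => simp
  | succ k ih =>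
    have hstep : (v - k) * n ≤ (n - k) * v := by
      rw [Nat.sub_mul, Nat.sub_mul, Nat.mul_comm v n]
      exact Nat.sub_le_sub_left (Nat.mul_le_mul_left k hvn) _
    calc v.descFactorial (k + 1) * n ^ (k + 1)
        = ((v - k) * n) * (v.descFactorial k * n ^ k) := by
          rw [Nat.descFactorial_succ, pow_succ]; ring
      _ ≤ ((n - k) * v) * (n.descFactorial k * v ^ k) := Nat.mul_le_mul hstep ih
      _ = n.descFactorial (k + 1) * v ^ (k + 1) := by
          rw [Nat.descFactorial_succ, pow_succ]; ring

theorem Nat.choose_mul_pow_le_choose_mul_pow {v n : ℕ} (hvn : v ≤ n) (k : ℕ) :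
    v.choose k * n ^ k ≤ n.choose k * v ^ k := by
  have h := Nat.descFactorial_mul_pow_le_descFactorial_mul_pow hvn k
  rw [Nat.descFactorial_eq_factorial_mul_choose, Nat.descFactorial_eq_factorial_mul_choose,
    Nat.mul_assoc, Nat.mul_assoc] at h
  exact Nat.le_of_mul_le_mul_left h k.factorial_pos

theorem Nat.choose_div_choose_le_pow {α : Type*} [Field α] [LinearOrder α] [IsStrictOrderedRing α]
    {v n : ℕ} (hvn : v ≤ n) (k : ℕ) :
    (v.choose k : α) / n.choose k ≤ ((v : α) / n) ^ k := by
  rcases n.eq_zero_or_pos with rfl | hn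
  · obtain rfl : v = 0 := Nat.le_zero.mp hvn
    cases k <;> simp
  rcases (Nat.zero_le (n.choose k)).eq_or_lt with h | h
  · rw [← h, Nat.cast_zero, div_zero]; positivity
  rw [div_pow, div_le_div_iff₀ (by exact_mod_cast h) (by positivity), mul_comm ((v : α) ^ k)]
  exact_mod_cast Nat.choose_mul_pow_le_choose_mul_pow hvn k

theorem Real.pow_div_factorial_lt_exp {x : ℝ} (hx : 0 ≤ x) {n : ℕ} (hn : 0 < n) :
    x ^ n / n ! < exp x :=
  calc x ^ n / n ! < 1 + x ^ n / n ! := lt_one_add _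
    _ ≤ ∑ i ∈ range n, x ^ i / i ! + x ^ n / n ! := by
      gcongr
      simpa using single_le_sum (f := fun i ↦ x ^ i / i !) (fun i _ ↦ by positivity)
        (mem_range.2 hn)
    _ = ∑ i ∈ range (n + 1), x ^ i / i ! := (sum_range_succ _ _).symm
    _ ≤ exp x := sum_le_exp_of_nonneg hx _

theorem Nat.choose_lt_exp_one_mul_div_pow {n r : ℕ} (hn : 0 < n) (hr : 0 < r) :
    (n.choose r : ℝ) < (exp 1 * n / r) ^ r :=
  calc (n.choose r : ℝ) ≤ (n : ℝ) ^ r / r ! := by exact_mod_cast Nat.choose_le_pow_div r n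
    _ = ((n : ℝ) / r) ^ r * ((r : ℝ) ^ r / r !) := by
      have : (r : ℝ) ≠ 0 := by positivity
      rw [div_pow]; field_simp
    _ < ((n : ℝ) / r) ^ r * exp r := by
      gcongr
      exact Real.pow_div_factorial_lt_exp r.cast_nonneg hr
    _ = (exp 1 * n / r) ^ r := by
      rw [← Real.exp_one_pow, mul_div_assoc, mul_pow, mul_comm]

theorem exp_one_div_pow_mul_pow_eq {x : ℝ} (hx : 0 < x) {n v : ℕ} (hxn : x * n = v) (d k : ℕ) :
    (exp 1 / x) ^ (2 * v + 1) * x ^ (k * (d * (v + 1))) =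
      (exp 1 * x ^ ((d : ℝ) * k - 1)) * (exp (2 * x) * x ^ (((d : ℝ) * k - 2) * x)) ^ n := by
  obtain ⟨L, rfl⟩ : ∃ L, exp L = x := ⟨log x, exp_log hx⟩
  simp only [← exp_sub, ← exp_mul, ← exp_nat_mul, ← exp_add, exp_eq_exp]
  push_cast
  linear_combination -(2 + ((d : ℝ) * k - 2) * L) * hxn

theorem stmt_7_general (n m v d k : ℕ) (hk : 1 ≤ k) (hkv : k ≤ v)
    (hvm : v + 1 ≤ m) (hmn : m ≤ n) :
    (n.choose v : ℝ) * (m.choose (v + 1) : ℝ) *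
        ((v.choose k : ℝ) / (n.choose k : ℝ)) ^ (d * (v + 1)) <
      (Real.exp 1 * ((v : ℝ) / n) ^ ((d : ℝ) * k - 1)) *
        (Real.exp (2 * ((v : ℝ) / n)) *
          ((v : ℝ) / n) ^ (((d : ℝ) * k - 2) * ((v : ℝ) / n))) ^ n := by
  have hv : 0 < v := hk.trans hkv
  have hn : 0 < n := by omega
  set x : ℝ := v / n
  have hx : 0 < x := by positivity
  have hxn : x * n = v := div_mul_cancel₀ _ (by positivity)
  have he : exp 1 / x = exp 1 * n / v := div_div_eq_mul_div _ _ _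
  have hchoose_n : (n.choose v : ℝ) < (exp 1 / x) ^ v :=
    he ▸ Nat.choose_lt_exp_one_mul_div_pow hn hv
  have hchoose_m : (m.choose (v + 1) : ℝ) ≤ (exp 1 / x) ^ (v + 1) := by
    refine (Nat.choose_lt_exp_one_mul_div_pow (by omega) v.succ_pos).le.trans ?_
    rw [he]
    gcongr
    exact v.le_succ
  have hratio : ((v.choose k : ℝ) / n.choose k) ^ (d * (v + 1)) ≤ (x ^ k) ^ (d * (v + 1)) := by
    gcongr
    exact Nat.choose_div_choose_le_pow (by omega) k
  rw [← exp_one_div_pow_mul_pow_eq hx hxn d k]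
  calc _ ≤ (n.choose v : ℝ) * (exp 1 / x) ^ (v + 1) * (x ^ k) ^ (d * (v + 1)) := by gcongr
    _ < (exp 1 / x) ^ v * (exp 1 / x) ^ (v + 1) * (x ^ k) ^ (d * (v + 1)) := by gcongr
    _ = _ := by ring

/-- Union-bound estimate (paper's Lemma 4): with `x = v/n`,
`C(n,v)·C(m,v+1)·(C(v,k)/C(n,k))^{d(v+1)} < c₀(x)·c₁(x)^n` where
`c₀(x) = e·x^{dk−1}` and `c₁(x) = e^{2x}·x^{(dk−2)x}` (real powers). -/
theorem stmt_7 (n m v d k : ℕ) (hd : 1 ≤ d) (hk : 1 ≤ k) (hkv : k ≤ v)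
    (hvm : v + 1 ≤ m) (hmn : m ≤ n) :
    (n.choose v : ℝ) * (m.choose (v + 1) : ℝ) *
        ((v.choose k : ℝ) / (n.choose k : ℝ)) ^ (d * (v + 1)) <
      (Real.exp 1 * ((v : ℝ) / n) ^ ((d : ℝ) * k - 1)) *
        (Real.exp (2 * ((v : ℝ) / n)) *
          ((v : ℝ) / n) ^ (((d : ℝ) * k - 2) * ((v : ℝ) / n))) ^ n :=
  stmt_7_general n m v d k hk hkv hvm hmn
end

section
/- Let n, k, v, d be natural numbers with d ≥ 1 and 1 ≤ k ≤ v < n. Then d · k · ((n − v)/v) · ((v − k)/n)^{dk} < d · ((n − v) · C(v, k−1)/C(n,k)) · (C(v,k)/C(n,k))^{d−1} (all quantities as real numbers). -/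
/-!
Put `x = (v - k) / n` and `r = C(v,k) / C(n,k)`. Comparing falling factorials,
`(v - k)^k < (v + 1 - k)^k ≤ v^{(k)}` and `n^{(k)} ≤ n^k`, so `x^k < r` and hence
`x^{dk} < r^d`.
Splitting off one factor `r` from `r^d`, the identity `C(v,k) · k = C(v,k-1) · (v - k + 1)`
gives `k · ((n - v) / v) · r ≤ (n - v) · C(v,k-1) / C(n,k)`.
-/

theorem Nat.sub_pow_mul_choose_lt_choose_mul_pow {n k v : ℕ} (hk : 0 < k) (hkv : k ≤ v)
    (hn : 0 < n) : (v - k) ^ k * n.choose k < v.choose k * n ^ k := by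
  refine Nat.lt_of_mul_lt_mul_left (a := k.factorial) ?_
  calc k.factorial * ((v - k) ^ k * n.choose k)
      = (v - k) ^ k * n.descFactorial k := by
        rw [Nat.descFactorial_eq_factorial_mul_choose]; ring
    _ ≤ (v - k) ^ k * n ^ k := Nat.mul_le_mul_left _ (n.descFactorial_le_pow k)
    _ < (v + 1 - k) ^ k * n ^ k :=
        Nat.mul_lt_mul_of_pos_right (Nat.pow_lt_pow_left (by omega) hk.ne') (by positivity)
    _ ≤ v.descFactorial k * n ^ k := Nat.mul_le_mul_right _ (v.pow_sub_le_descFactorial k)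
    _ = k.factorial * (v.choose k * n ^ k) := by
        rw [Nat.descFactorial_eq_factorial_mul_choose]; ring

theorem sub_div_pow_lt_choose_div_choose {n k v : ℕ} (hk : 0 < k) (hkv : k ≤ v)
    (hvn : v ≤ n) :
    (((v : ℝ) - k) / n) ^ k < (v.choose k : ℝ) / n.choose k := by
  have hcast : (v : ℝ) - k = ((v - k : ℕ) : ℝ) := by push_cast [hkv]; ring
  have hn : (0 : ℝ) < n := by exact_mod_cast hk.trans_le (hkv.trans hvn)
  rw [hcast, div_pow, div_lt_div_iff₀ (pow_pos hn k)
    (by exact_mod_cast Nat.choose_pos (hkv.trans hvn))]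
  exact_mod_cast Nat.sub_pow_mul_choose_lt_choose_mul_pow hk hkv (by omega)

theorem Nat.mul_choose_le_mul_choose_pred (v k : ℕ) :
    k * v.choose k ≤ v * v.choose (k - 1) := by
  cases k with
  | zero => simp
  | succ j =>
    calc (j + 1) * v.choose (j + 1) = v.choose j * (v - j) := by
          rw [mul_comm, Nat.choose_succ_right_eq]
      _ ≤ v * v.choose j := by rw [mul_comm]; exact Nat.mul_le_mul_right _ (Nat.sub_le v j)

theorem mul_sub_div_mul_choose_div_choose_le {n k v : ℕ} (hv : 0 < v) (hvn : v ≤ n) :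
    k * (((n : ℝ) - v) / v) * ((v.choose k : ℝ) / n.choose k) ≤
      ((n : ℝ) - v) * v.choose (k - 1) / n.choose k := by
  have hnv : (0 : ℝ) ≤ (n : ℝ) - v := sub_nonneg.mpr (by exact_mod_cast hvn)
  have hchoose : (k * v.choose k : ℝ) / v ≤ v.choose (k - 1) := by
    rw [div_le_iff₀ (by exact_mod_cast hv), mul_comm _ (v : ℝ)]
    exact_mod_cast Nat.mul_choose_le_mul_choose_pred v k
  calc k * (((n : ℝ) - v) / v) * ((v.choose k : ℝ) / n.choose k)
      = ((n : ℝ) - v) * ((k * v.choose k : ℝ) / v) / n.choose k := by ring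
    _ ≤ ((n : ℝ) - v) * v.choose (k - 1) / n.choose k := by gcongr

/-- Lower bound on the probability `p₁` that a random edge connects a vertex set
of size `v` to exactly one vertex outside of it:
`dk·((n−v)/v)·((v−k)/n)^{dk} < d·((n−v)·C(v,k−1)/C(n,k))·(C(v,k)/C(n,k))^{d−1}`. -/
theorem stmt_12 (n k v d : ℕ) (hd : 1 ≤ d) (hk : 1 ≤ k) (hkv : k ≤ v)
    (hvn : v < n) :
    (d : ℝ) * k * (((n : ℝ) - v) / v) * ((((v : ℝ) - k) / n) ^ (d * k)) <
      (d : ℝ) * (((n : ℝ) - v) * (v.choose (k - 1)) / n.choose k) *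
        ((v.choose k : ℝ) / n.choose k) ^ (d - 1) := by
  set r : ℝ := (v.choose k : ℝ) / n.choose k
  have hnv : (0 : ℝ) < (n : ℝ) - v := sub_pos.mpr (by exact_mod_cast hvn)
  have hv : 0 < v := hk.trans hkv
  have hx : 0 ≤ ((v : ℝ) - k) / n :=
    div_nonneg (sub_nonneg.mpr (by exact_mod_cast hkv)) (by positivity)
  have hpow : (((v : ℝ) - k) / n) ^ (d * k) < r ^ d := by
    rw [mul_comm, pow_mul]
    exact pow_lt_pow_left₀ (sub_div_pow_lt_choose_div_choose hk hkv hvn.le) (pow_nonneg hx k) (by omega)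
  calc (d : ℝ) * k * (((n : ℝ) - v) / v) * ((((v : ℝ) - k) / n) ^ (d * k))
      < d * k * (((n : ℝ) - v) / v) * r ^ d := by gcongr
    _ = d * (k * (((n : ℝ) - v) / v) * r) * r ^ (d - 1) := by
        rw [show r ^ d = r * r ^ (d - 1) by rw [← pow_succ', Nat.sub_add_cancel hd]]; ring
    _ ≤ d * (((n : ℝ) - v) * v.choose (k - 1) / n.choose k) * r ^ (d - 1) := by
        gcongr; exact mul_sub_div_mul_choose_div_choose_le hv hvn.le
end

section
/- Let n, v, d, k be natural numbers with d ≥ 1, 1 ≤ k, k ∣ n, k ∣ v, k ≤ v, and v + 1 ≤ n, and set x = v/n as a real number. Then (C(n/k, v/k) : ℝ) · C(n, v+1) · (v/n)^{d(v+1)} < c₆(x) · c₇(x)^n, where c₆(x) = e · x^{d−1} and c₇(x) = e^{(k+1)x/k} · x^{(dk−1−k)x/k} (real powers). -/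
/-!
Each binomial coefficient is bounded by `C(N, R) ≤ (e N / R)^R`. With `x = v/n` this gives
`C(n/k, v/k) ≤ (e/x)^{v/k}` and, since `v + 1 > v`, strictly `C(n, v+1) < (e/x)^{v+1}`. The
right-hand side is exactly `(e/x)^{v/k + v + 1} · x^{d(v+1)}`, written as one exponential times
one real power of `x`.
-/

open Real

theorem Nat.choose_le_exp_one_mul_div_pow (n r : ℕ) :
    (n.choose r : ℝ) ≤ (exp 1 * n / r) ^ r := by
  rcases r.eq_zero_or_pos with rfl | hr
  · simp
  have hr' : (r : ℝ) ≠ 0 := by positivity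
  calc (n.choose r : ℝ) ≤ (n : ℝ) ^ r / r.factorial := Nat.choose_le_pow_div r n
    _ = ((r : ℝ) ^ r / r.factorial) * (n / r) ^ r := by
        rw [div_pow]; field_simp
    _ ≤ exp r * (n / r) ^ r := by
        gcongr; exact pow_div_factorial_le_exp (r : ℝ) r.cast_nonneg r
    _ = (exp 1 * n / r) ^ r := by rw [mul_div_assoc, mul_pow, exp_one_pow]

theorem Nat.choose_div_le_exp_one_div_pow {n v k : ℕ} (hkn : k ∣ n) (hkv : k ∣ v) :
    ((n / k).choose (v / k) : ℝ) ≤ (exp 1 / (v / n)) ^ (v / k) := by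
  refine (Nat.choose_le_exp_one_mul_div_pow _ _).trans_eq ?_
  rw [div_div_eq_mul_div, mul_div_assoc, mul_div_assoc, Nat.cast_div_div_div_cancel_right hkv hkn]

theorem Nat.choose_succ_lt_exp_one_div_pow {n v : ℕ} (hv : 0 < v) (hn : 0 < n) :
    (n.choose (v + 1) : ℝ) < (exp 1 / (v / n)) ^ (v + 1) := by
  refine (Nat.choose_le_exp_one_mul_div_pow _ _).trans_lt ?_
  rw [div_div_eq_mul_div]
  gcongr
  exact Nat.lt_succ_self v

theorem exp_one_div_pow_mul_pow {x : ℝ} (hx : 0 < x) (m r : ℕ) :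
    (exp 1 / x) ^ m * x ^ r = exp m * x ^ ((r : ℝ) - m) := by
  rw [div_pow, exp_one_pow, rpow_sub hx, rpow_natCast, rpow_natCast]
  ring

theorem exp_mul_rpow_pow {x : ℝ} (hx : 0 ≤ x) (a b : ℝ) (n : ℕ) :
    (exp a * x ^ b) ^ n = exp (n * a) * x ^ (n * b) := by
  rw [mul_pow, ← exp_nat_mul, ← rpow_natCast (x ^ b), ← rpow_mul hx, mul_comm b]

theorem stmt_14_general (n v d k : ℕ) (hk : 1 ≤ k)
    (hkn : k ∣ n) (hkv : k ∣ v) (hkv' : k ≤ v) (hvn : v + 1 ≤ n) :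
    ((n / k).choose (v / k) : ℝ) * (n.choose (v + 1) : ℝ) *
        ((v : ℝ) / n) ^ (d * (v + 1)) <
      (Real.exp 1 * ((v : ℝ) / n) ^ ((d : ℝ) - 1)) *
        (Real.exp ((((k : ℝ) + 1) * ((v : ℝ) / n)) / k) *
          ((v : ℝ) / n) ^
            ((((d : ℝ) * k - 1 - k) * ((v : ℝ) / n)) / k)) ^ n := by
  have hv : 0 < v := hk.trans hkv'
  have hn : 0 < n := by omega
  set x : ℝ := (v : ℝ) / n with hx_def
  have hx : 0 < x := by positivity
  have hnx : (n : ℝ) * x = v := by rw [hx_def]; field_simp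
  have hvk : ((v / k : ℕ) : ℝ) = v / k := Nat.cast_div_charZero hkv
  calc _ < (exp 1 / x) ^ (v / k) * (exp 1 / x) ^ (v + 1) * x ^ (d * (v + 1)) := by
        gcongr ?_ * _
        exact mul_lt_mul' (Nat.choose_div_le_exp_one_div_pow hkn hkv)
          (Nat.choose_succ_lt_exp_one_div_pow hv hn) (by positivity) (by positivity)
    _ = exp ((v / k + (v + 1) : ℕ) : ℝ) *
          x ^ ((d * (v + 1) : ℕ) - ((v / k + (v + 1) : ℕ) : ℝ)) := by
        rw [← pow_add, exp_one_div_pow_mul_pow hx]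
    _ = _ := by
        rw [exp_mul_rpow_pow hx.le, mul_mul_mul_comm, ← exp_add, ← rpow_add hx]
        congr 2
        · push_cast [hvk]; field_simp; linear_combination -((k : ℝ) + 1) * hnx
        · push_cast [hvk]; field_simp; linear_combination -((d : ℝ) * k - 1 - k) * hnx

/-- Union-bound estimate for the paged model in its worst case (page size equals
bucket size `k`): with `x = v/n`,
`C(n/k, v/k)·C(n, v+1)·(v/n)^{d(v+1)} < c₆(x)·c₇(x)^n` where `c₆(x) = e·x^{d−1}`
and `c₇(x) = e^{(k+1)x/k}·x^{(dk−1−k)x/k}` (real powers). -/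
theorem stmt_14 (n v d k : ℕ) (hd : 1 ≤ d) (hk : 1 ≤ k)
    (hkn : k ∣ n) (hkv : k ∣ v) (hkv' : k ≤ v) (hvn : v + 1 ≤ n) :
    ((n / k).choose (v / k) : ℝ) * (n.choose (v + 1) : ℝ) *
        ((v : ℝ) / n) ^ (d * (v + 1)) <
      (Real.exp 1 * ((v : ℝ) / n) ^ ((d : ℝ) - 1)) *
        (Real.exp ((((k : ℝ) + 1) * ((v : ℝ) / n)) / k) *
          ((v : ℝ) / n) ^
            ((((d : ℝ) * k - 1 - k) * ((v : ℝ) / n)) / k)) ^ n :=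
  stmt_14_general n v d k hk hkn hkv hkv' hvn
end
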